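/- arXiv:2412.20119 — 2 statements merged into one kernel-verified Lean document; each statement's English description precedes it below -/
import Mathlib

section
/- Let E be a real Banach space, let p > 1 and a > 0 be real numbers, let L ∈ E, and let h : ℝ → E be differentiable on [a, ∞). If h(r) → 0 as r → ∞ and r^p • h'(r) → L as r → ∞, then r^{p−1} • h(r) → (1/(1−p)) • L as r → ∞. -/
/-! Subtracting `(r ^ (1 - p) / (1 - p)) • L`, whose derivative is `r ^ (-p) • L`, leaves a
function `g` with `g → 0` and `g' = o(r ^ (-p))`. Integrating the bound `‖g'‖ ≤ ε r ^ (-p)`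
from `r` to `∞` gives `‖g r‖ ≤ ε r ^ (1 - p) / (p - 1)`, i.e. `g = o(r ^ (1 - p))`. -/

open Filter Topology Asymptotics

section

variable {E : Type*} [NormedAddCommGroup E] [NormedSpace ℝ E]

theorem norm_le_of_tendsto_zero_of_norm_deriv_le_neg_deriv {g g' : ℝ → E} {B B' : ℝ → ℝ}
    {r : ℝ} (hg : ∀ t ≥ r, HasDerivAt g (g' t) t) (hB : ∀ t ≥ r, HasDerivAt B (B' t) t)
    (bound : ∀ t ≥ r, ‖g' t‖ ≤ -B' t) (hg0 : Tendsto g atTop (𝓝 0))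
    (hB0 : Tendsto B atTop (𝓝 0)) : ‖g r‖ ≤ B r := by
  have fence : ∀ b ≥ r, ‖g b - g r‖ ≤ B r - B b := fun b hb =>
    image_norm_le_of_norm_deriv_right_le_deriv_boundary' (f := fun t => g t - g r)
      (B := fun t => B r - B t)
      (fun t ht => ((hg t ht.1).continuousAt.sub continuousAt_const).continuousWithinAt)
      (fun t ht => ((hg t ht.1).sub_const (g r)).hasDerivWithinAt) (by simp)
      (fun t ht => ((hB t ht.1).const_sub _).continuousAt.continuousWithinAt)
      (fun t ht => ((hB t ht.1).const_sub (B r)).hasDerivWithinAt)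
      (fun t ht => bound t ht.1) ⟨hb, le_rfl⟩
  simpa using le_of_tendsto_of_tendsto (hg0.sub_const (g r)).norm
    (tendsto_const_nhds.sub hB0) (eventually_atTop.2 ⟨r, fence⟩)

theorem isLittleO_rpow_of_deriv_isLittleO_rpow {g g' : ℝ → E} {p : ℝ} (hp : 1 < p)
    (hg : ∀ᶠ t in atTop, HasDerivAt g (g' t) t) (hg' : g' =o[atTop] fun t => t ^ (-p))
    (hg0 : Tendsto g atTop (𝓝 0)) : g =o[atTop] fun t => t ^ (1 - p) := by
  refine isLittleO_iff.2 fun c hc => ?_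
  obtain ⟨R, hR⟩ := eventually_atTop.1 <| (eventually_gt_atTop 0).and <|
    hg.and (isLittleO_iff.1 hg' (mul_pos hc (sub_pos.2 hp)))
  filter_upwards [eventually_ge_atTop R] with r hr
  rw [Real.norm_of_nonneg (Real.rpow_nonneg (hR r hr).1.le _)]
  refine norm_le_of_tendsto_zero_of_norm_deriv_le_neg_deriv (g' := g')
    (B' := fun t => c * ((1 - p) * t ^ (1 - p - 1)))
    (fun t ht => (hR t (hr.trans ht)).2.1)
    (fun t ht => (Real.hasDerivAt_rpow_const (Or.inl (hR t (hr.trans ht)).1.ne')).const_mul c)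
    (fun t ht => ?_) hg0 ?_
  · obtain ⟨ht0, -, hbound⟩ := hR t (hr.trans ht)
    rw [Real.norm_of_nonneg (Real.rpow_nonneg ht0.le _)] at hbound
    convert hbound using 1
    rw [show 1 - p - 1 = -p by ring]
    ring
  · simpa using (tendsto_rpow_neg_atTop (sub_pos.2 hp)).const_mul c

end

theorem stmt0_general {E : Type*} [NormedAddCommGroup E] [NormedSpace ℝ E]
    (p a : ℝ) (hp : 1 < p) (L : E) (h h' : ℝ → E)
    (hderiv : ∀ r ∈ Set.Ici a, HasDerivAt h (h' r) r)
    (hlim : Tendsto h atTop (𝓝 (0 : E)))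
    (hlim' : Tendsto (fun r : ℝ => r ^ p • h' r) atTop (𝓝 L)) :
    Tendsto (fun r : ℝ => r ^ (p - 1) • h r) atTop (𝓝 ((1 / (1 - p)) • L)) := by
  set g : ℝ → E := fun r => h r - (r ^ (1 - p) / (1 - p)) • L with hg_def
  have hg0 : Tendsto g atTop (𝓝 0) := by
    simpa using hlim.sub (((tendsto_rpow_neg_atTop (sub_pos.2 hp)).div_const (1 - p)).smul_const L)
  have hg : ∀ᶠ t in atTop, HasDerivAt g (t ^ (-p) • (t ^ p • h' t - L)) t := by
    filter_upwards [eventually_ge_atTop a, eventually_gt_atTop 0] with t hta ht0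
    convert (hderiv t hta).sub (((Real.hasDerivAt_rpow_const (p := 1 - p)
      (Or.inl ht0.ne')).div_const (1 - p)).smul_const L) using 1
    · rfl
    rw [smul_sub, smul_smul, ← Real.rpow_add ht0, show 1 - p - 1 = -p by ring,
      neg_add_cancel, Real.rpow_zero, one_smul, mul_div_cancel_left₀ _ (sub_ne_zero.2 hp.ne)]
  have hg' : (fun t => t ^ (-p) • (t ^ p • h' t - L)) =o[atTop] fun t => t ^ (-p) := by
    simpa using (isBigO_refl (fun t : ℝ => t ^ (-p)) atTop).smul_isLittleO
      ((isLittleO_one_iff ℝ).2 (tendsto_sub_nhds_zero_iff.2 hlim'))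
  have hg_scaled :=
    (isLittleO_rpow_of_deriv_isLittleO_rpow hp hg hg' hg0).tendsto_inv_smul_nhds_zero
  rw [← zero_add ((1 / (1 - p)) • L)]
  refine (hg_scaled.add_const _).congr' ?_
  filter_upwards [eventually_gt_atTop 0] with r hr
  have hrr : r ^ (p - 1) * r ^ (1 - p) = 1 := by
    rw [← Real.rpow_add hr]; simp
  rw [← Real.rpow_neg hr.le, neg_sub, hg_def, smul_sub, smul_smul, mul_div_assoc', hrr,
    sub_add_cancel]

/-- **L'Hôpital-type limit lemma** (Lemma 3.1 of the paper).
If `h : ℝ → E` is differentiable on `[a, ∞)`, `h(r) → 0` and `r^p • h'(r) → L`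
as `r → ∞` (with `p > 1`), then `r^(p-1) • h(r) → (1/(1-p)) • L`. -/
theorem stmt0 {E : Type*} [NormedAddCommGroup E] [NormedSpace ℝ E] [CompleteSpace E]
    (p a : ℝ) (hp : 1 < p) (ha : 0 < a) (L : E) (h h' : ℝ → E)
    (hderiv : ∀ r ∈ Set.Ici a, HasDerivAt h (h' r) r)
    (hlim : Tendsto h atTop (𝓝 (0 : E)))
    (hlim' : Tendsto (fun r : ℝ => r ^ p • h' r) atTop (𝓝 L)) :
    Tendsto (fun r : ℝ => r ^ (p - 1) • h r) atTop (𝓝 ((1 / (1 - p)) • L)) :=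
  stmt0_general p a hp L h h' hderiv hlim hlim'
end

section
/- Let k be a natural number, let γ ∈ (0,1) and C ≥ 0 be real numbers, and let f : (0,1] → ℝ be (k+1)-times differentiable on (0,1] with |f^{(j)}(ρ)| ≤ C for all ρ ∈ (0,1] and all 0 ≤ j ≤ k, and |f^{(k+1)}(ρ)| ≤ C · ρ^{γ−1} for all ρ ∈ (0,1]. Then f extends to a function f̃ : [0,1] → ℝ that is k times continuously differentiable on [0,1] (with one-sided derivatives at 0), and whose k-th derivative satisfies |f̃^{(k)}(ρ₁) − f̃^{(k)}(ρ₂)| ≤ (C/γ) · |ρ₁ − ρ₂|^γ for all ρ₁, ρ₂ ∈ [0,1]; that is, f̃ belongs to the Hölder space C^{k,γ}([0,1]). -/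
/-!
On `(0,1]` the derivatives `f, f', …, f⁽ᵏ⁾` are uniformly continuous: the lower ones are
`C`-Lipschitz, and `f⁽ᵏ⁾` is `γ`-Hölder because `|f⁽ᵏ⁺¹⁾(ρ)| ≤ Cρ^(γ-1)` is dominated by the
derivative of `(C/γ) ρ^γ`, and `b^γ - a^γ ≤ (b - a)^γ`. Hence each of them has a limit at `0`.
Extending each derivative by its limit gives a tower of continuous functions on `[0,1]`, each the
one-sided derivative of the previous one at `0` as well (a continuous function whose derivative
has a limit at an endpoint is differentiable there), so the extension of `f` is `C^k`, and the
same comparison argument, now on `[0,1]`, gives the Hölder bound for its `k`-th derivative.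
-/

open Filter Topology Set Function

theorem Real.rpow_sub_rpow_le_rpow_sub {a b γ : ℝ} (hγ0 : 0 ≤ γ) (hγ1 : γ ≤ 1) (ha : 0 ≤ a)
    (hab : a ≤ b) : b ^ γ - a ^ γ ≤ (b - a) ^ γ := by
  have := Real.rpow_add_le_add_rpow (sub_nonneg.2 hab) ha hγ0 hγ1
  rw [sub_add_cancel] at this
  linarith

theorem UniformContinuousOn.exists_tendsto_nhdsWithin {α β : Type*} [UniformSpace α]
    [UniformSpace β] [CompleteSpace β] {f : α → β} {s : Set α} {a : α}
    (hf : UniformContinuousOn f s) (ha : a ∈ closure s) : ∃ L, Tendsto f (𝓝[s] a) (𝓝 L) :=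
  haveI := mem_closure_iff_nhdsWithin_neBot.1 ha
  cauchy_map_iff_exists_tendsto.1 ((cauchy_nhds.mono nhdsWithin_le_nhds).map_of_le hf inf_le_right)

theorem uniformContinuousOn_of_abs_sub_le_rpow {f : ℝ → ℝ} {s : Set ℝ} {K γ : ℝ} (hγ : 0 < γ)
    (hf : ∀ x ∈ s, ∀ y ∈ s, |f x - f y| ≤ K * |x - y| ^ γ) : UniformContinuousOn f s := by
  have hK : ContinuousAt (fun d : ℝ => K * d ^ γ) 0 :=
    continuousAt_const.mul (Real.continuousAt_rpow_const _ _ (Or.inr hγ.le))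
  refine Metric.uniformContinuousOn_iff.2 fun ε hε => ?_
  obtain ⟨δ, hδ, hKδ⟩ := Metric.continuousAt_iff.1 hK ε hε
  refine ⟨δ, hδ, fun x hx y hy hxy => (hf x hx y hy).trans_lt ((le_abs_self _).trans_lt ?_)⟩
  simpa [Real.dist_eq, Real.zero_rpow hγ.ne'] using
    hKδ (x := |x - y|) (by simpa [Real.dist_eq] using hxy)

theorem Convex.uniformContinuousOn_of_abs_deriv_le {f f' : ℝ → ℝ} {s : Set ℝ} {C : ℝ}
    (hs : Convex ℝ s) (hf : ∀ x ∈ s, HasDerivWithinAt f (f' x) s x)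
    (bound : ∀ x ∈ s, |f' x| ≤ C) : UniformContinuousOn f s := by
  refine (hs.lipschitzOnWith_of_nnnorm_hasDerivWithin_le hf (C := C.toNNReal) fun x hx => ?_)
    |>.uniformContinuousOn
  rw [← NNReal.coe_le_coe, coe_nnnorm, Real.norm_eq_abs]
  exact (bound x hx).trans (Real.le_coe_toNNReal C)

theorem abs_sub_le_sub_of_abs_deriv_le {f f' B B' : ℝ → ℝ} {a b : ℝ} (hab : a ≤ b)
    (hf : ContinuousOn f (Icc a b)) (hB : ContinuousOn B (Icc a b))
    (hf' : ∀ x ∈ Ioo a b, HasDerivAt f (f' x) x) (hB' : ∀ x ∈ Ioo a b, HasDerivAt B (B' x) x)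
    (bound : ∀ x ∈ Ioo a b, |f' x| ≤ B' x) : |f b - f a| ≤ B b - B a := by
  have hmem : a ∈ Icc a b ∧ b ∈ Icc a b := ⟨left_mem_Icc.2 hab, right_mem_Icc.2 hab⟩
  have hsub := monotoneOn_of_hasDerivWithinAt_nonneg (convex_Icc a b) (hB.sub hf)
    (by simpa only [interior_Icc] using fun x hx => ((hB' x hx).sub (hf' x hx)).hasDerivWithinAt)
    (by simpa only [interior_Icc, sub_nonneg] using fun x hx => (le_abs_self _).trans (bound x hx))
    hmem.1 hmem.2 hab
  have hadd := monotoneOn_of_hasDerivWithinAt_nonneg (convex_Icc a b) (hB.add hf)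
    (by simpa only [interior_Icc] using fun x hx => ((hB' x hx).add (hf' x hx)).hasDerivWithinAt)
    (by simpa only [interior_Icc] using fun x hx => by linarith [neg_abs_le (f' x), bound x hx])
    hmem.1 hmem.2 hab
  simp only [Pi.sub_apply, Pi.add_apply] at hsub hadd
  rw [abs_le]
  constructor <;> linarith

theorem abs_sub_le_mul_rpow_of_abs_deriv_le {f f' : ℝ → ℝ} {s : Set ℝ} [s.OrdConnected]
    {C γ : ℝ} (hs : s ⊆ Ici 0) (hγ0 : 0 < γ) (hγ1 : γ ≤ 1) (hC : 0 ≤ C)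
    (hf : ContinuousOn f s) (hf' : ∀ x ∈ interior s, HasDerivAt f (f' x) x)
    (bound : ∀ x ∈ interior s, |f' x| ≤ C * x ^ (γ - 1)) :
    ∀ x ∈ s, ∀ y ∈ s, |f x - f y| ≤ C / γ * |x - y| ^ γ := by
  have hB' : ∀ z, 0 < z → HasDerivAt (fun z => C / γ * z ^ γ) (C * z ^ (γ - 1)) z := fun z hz => by
    have := (Real.hasDerivAt_rpow_const (p := γ) (Or.inl hz.ne')).const_mul (C / γ)
    rwa [← mul_assoc, div_mul_cancel₀ _ hγ0.ne'] at this
  have key : ∀ x ∈ s, ∀ y ∈ s, x ≤ y → |f y - f x| ≤ C / γ * (y - x) ^ γ := by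
    intro x hx y hy hxy
    have hIcc : Icc x y ⊆ s := Set.Icc_subset s hx hy
    have hIoo : Ioo x y ⊆ interior s :=
      interior_maximal (Ioo_subset_Icc_self.trans hIcc) isOpen_Ioo
    calc |f y - f x| ≤ C / γ * y ^ γ - C / γ * x ^ γ :=
          abs_sub_le_sub_of_abs_deriv_le hxy (hf.mono hIcc)
            ((Real.continuous_rpow_const hγ0.le).const_mul _).continuousOn
            (fun z hz => hf' z (hIoo hz)) (fun z hz => hB' z ((hs hx).trans_lt hz.1))
            (fun z hz => bound z (hIoo hz))
      _ = C / γ * (y ^ γ - x ^ γ) := by ring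
      _ ≤ C / γ * (y - x) ^ γ := by
          gcongr; exact Real.rpow_sub_rpow_le_rpow_sub hγ0.le hγ1 (hs hx) hxy
  intro x hx y hy
  rcases le_total x y with h | h
  · rw [abs_sub_comm (f x), abs_sub_comm x, abs_of_nonneg (sub_nonneg.2 h)]
    exact key x hx y hy h
  · rw [abs_of_nonneg (sub_nonneg.2 h)]
    exact key y hy x hx h

section Extension

variable {𝕜 : Type*} [NontriviallyNormedField 𝕜] {E : Type*} [NormedAddCommGroup E]
  [NormedSpace 𝕜 E]

theorem HasDerivAt.update_of_ne [DecidableEq 𝕜] {f : 𝕜 → E} {f' : E} {x a : 𝕜} (hf : HasDerivAt f f' x)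
    (hx : x ≠ a) (b : E) : HasDerivAt (update f a b) f' x :=
  hf.congr_of_eventuallyEq <| by
    filter_upwards [eventually_ne_nhds hx] with y hy using Function.update_of_ne hy _ _

theorem continuousOn_update_Icc_of_tendsto {β : Type*} [TopologicalSpace β] {g : ℝ → β}
    {a b : ℝ} {L : β} (hg : ContinuousOn g (Ioc a b)) (hL : Tendsto g (𝓝[Ioc a b] a) (𝓝 L)) :
    ContinuousOn (update g a L) (Icc a b) := by
  rw [continuousOn_update_iff, Icc_sdiff_left]
  exact ⟨hg, fun _ => hL⟩

theorem hasDerivWithinAt_update_Icc_of_tendsto {F : Type*} [NormedAddCommGroup F]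
    [NormedSpace ℝ F] {g g' : ℝ → F} {a b : ℝ} {L L' : F} (hab : a < b)
    (hg : ∀ x ∈ Ioc a b, HasDerivWithinAt g (g' x) (Ioc a b) x)
    (hL : Tendsto g (𝓝[Ioc a b] a) (𝓝 L)) (hL' : Tendsto g' (𝓝[Ioc a b] a) (𝓝 L')) :
    ∀ x ∈ Icc a b, HasDerivWithinAt (update g a L) (update g' a L' x) (Icc a b) x := by
  intro x hx
  rcases hx.1.eq_or_lt with rfl | hax
  · rw [update_self]
    have hIoo : Ioo a b ∈ 𝓝[>] a := Ioo_mem_nhdsGT hab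
    have hderiv : ∀ y ∈ Ioo a b, HasDerivAt (update g a L) (g' y) y := fun y hy =>
      ((hg y (Ioo_subset_Ioc_self hy)).hasDerivAt (Ioc_mem_nhds hy.1 hy.2)).update_of_ne
        hy.1.ne' L
    refine (hasDerivWithinAt_Ici_of_tendsto_deriv
      (fun y hy => (hderiv y hy).differentiableAt.differentiableWithinAt) ?_ hIoo ?_).mono
      Icc_subset_Ici_self
    · rw [continuousWithinAt_update_same]
      exact hL.mono_left (nhdsWithin_mono _ (sdiff_subset.trans Ioo_subset_Ioc_self))
    · rw [nhdsWithin_Ioc_eq_nhdsGT hab] at hL'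
      exact hL'.congr' (eventually_of_mem hIoo fun y hy => (hderiv y hy).deriv.symm)
  · rw [update_of_ne hax.ne']
    refine ((hg x ⟨hax, hx.2⟩).congr (fun y hy => update_of_ne hy.1.ne' _ _)
      (update_of_ne hax.ne' _ _)).mono_of_mem_nhdsWithin ?_
    exact mem_nhdsWithin.2 ⟨Ioi a, isOpen_Ioi, hax, fun y hy => ⟨hy.1, hy.2.2⟩⟩

theorem eqOn_iteratedDerivWithin_of_hasDerivWithinAt {G : ℕ → 𝕜 → E} {t : Set 𝕜} {n : ℕ}
    (ht : UniqueDiffOn 𝕜 t) (hG : ∀ j < n, ∀ x ∈ t, HasDerivWithinAt (G j) (G (j + 1) x) t x) :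
    ∀ j ≤ n, EqOn (iteratedDerivWithin j (G 0) t) (G j) t := by
  intro j
  induction j with
  | zero => exact fun _ => by simp [EqOn]
  | succ j ih =>
    intro hj x hx
    rw [iteratedDerivWithin_succ, derivWithin_congr (ih (by omega)) (ih (by omega) hx)]
    exact (hG j hj x hx).derivWithin (ht x hx)

theorem contDiffOn_of_hasDerivWithinAt_succ {G : ℕ → 𝕜 → E} {t : Set 𝕜} {n : ℕ}
    (ht : UniqueDiffOn 𝕜 t) (hG : ∀ j < n, ∀ x ∈ t, HasDerivWithinAt (G j) (G (j + 1) x) t x)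
    (hGn : ContinuousOn (G n) t) : ContDiffOn 𝕜 n (G 0) t := by
  have heq := eqOn_iteratedDerivWithin_of_hasDerivWithinAt ht hG
  have hdiff : ∀ j < n, DifferentiableOn 𝕜 (G j) t := fun j hj x hx =>
    (hG j hj x hx).differentiableWithinAt
  have := contDiffOn_of_continuousOn_differentiableOn_deriv (n := (n : ℕ∞)) (f := G 0) (s := t)
    (fun m hm => by
      rw [Nat.cast_le] at hm
      refine ContinuousOn.congr ?_ (heq m hm)
      rcases hm.lt_or_eq with hm | rfl
      · exact (hdiff m hm).continuousOn
      · exact hGn)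
    (fun m hm => by
      rw [Nat.cast_lt] at hm
      exact (hdiff m hm).congr (heq m hm.le))
  exact_mod_cast this

end Extension

/-- **`C^{k,γ}` regularity up to the boundary** (analytic core of Theorem 6.2 of the
paper). If `f : (0,1] → ℝ` is `(k+1)`-times differentiable on `(0,1]` with derivatives
of order `≤ k` bounded by `C` and `(k+1)`-st derivative bounded by `C·ρ^(γ-1)`, then
`f` extends to a `C^k` function on `[0,1]` whose `k`-th derivative is `γ`-Hölder with
constant `C/γ`, i.e. the extension belongs to `C^{k,γ}([0,1])`. -/
theorem stmt6 (k : ℕ) (γ C : ℝ) (hγ0 : 0 < γ) (hγ1 : γ < 1) (hC : 0 ≤ C)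
    (f : ℝ → ℝ)
    (hdiff : ∀ j ≤ k, DifferentiableOn ℝ
      (iteratedDerivWithin j f (Set.Ioc (0 : ℝ) 1)) (Set.Ioc (0 : ℝ) 1))
    (hbound : ∀ j ≤ k, ∀ ρ ∈ Set.Ioc (0 : ℝ) 1,
      |iteratedDerivWithin j f (Set.Ioc (0 : ℝ) 1) ρ| ≤ C)
    (hbound' : ∀ ρ ∈ Set.Ioc (0 : ℝ) 1,
      |iteratedDerivWithin (k + 1) f (Set.Ioc (0 : ℝ) 1) ρ| ≤ C * ρ ^ (γ - 1)) :
    ∃ ftilde : ℝ → ℝ,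
      (∀ ρ ∈ Set.Ioc (0 : ℝ) 1, ftilde ρ = f ρ) ∧
      ContDiffOn ℝ k ftilde (Set.Icc (0 : ℝ) 1) ∧
      ∀ ρ₁ ∈ Set.Icc (0 : ℝ) 1, ∀ ρ₂ ∈ Set.Icc (0 : ℝ) 1,
        |iteratedDerivWithin k ftilde (Set.Icc (0 : ℝ) 1) ρ₁ -
          iteratedDerivWithin k ftilde (Set.Icc (0 : ℝ) 1) ρ₂| ≤
            (C / γ) * |ρ₁ - ρ₂| ^ γ := by
  set s := Ioc (0 : ℝ) 1
  set g : ℕ → ℝ → ℝ := fun j => iteratedDerivWithin j f s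
  have hg : ∀ j ≤ k, ∀ x ∈ s, HasDerivWithinAt (g j) (g (j + 1) x) s x := fun j hj x hx => by
    simpa only [g, iteratedDerivWithin_succ] using (hdiff j hj x hx).hasDerivWithinAt
  have hgk : ∀ x ∈ Ioo (0 : ℝ) 1, HasDerivAt (g k) (g (k + 1) x) x := fun x hx =>
    (hg k le_rfl x (Ioo_subset_Ioc_self hx)).hasDerivAt (Ioc_mem_nhds hx.1 hx.2)
  have hgk_bound : ∀ x ∈ Ioo (0 : ℝ) 1, |g (k + 1) x| ≤ C * x ^ (γ - 1) := fun x hx =>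
    hbound' x (Ioo_subset_Ioc_self hx)
  have hL : ∀ j ≤ k, Tendsto (g j) (𝓝[s] 0) (𝓝 (limUnder (𝓝[s] 0) (g j))) := by
    intro j hj
    refine tendsto_nhds_limUnder <| UniformContinuousOn.exists_tendsto_nhdsWithin ?_ <| by
      rw [closure_Ioc zero_ne_one]; exact left_mem_Icc.2 zero_le_one
    rcases hj.lt_or_eq with hj | rfl
    · exact (convex_Ioc 0 1).uniformContinuousOn_of_abs_deriv_le (hg j hj.le) (hbound (j + 1) hj)
    · exact uniformContinuousOn_of_abs_sub_le_rpow hγ0 <|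
        abs_sub_le_mul_rpow_of_abs_deriv_le (fun x hx => hx.1.le) hγ0 hγ1.le hC
          (hdiff j le_rfl).continuousOn (by rwa [interior_Ioc]) (by rwa [interior_Ioc])
  set G : ℕ → ℝ → ℝ := fun j => update (g j) 0 (limUnder (𝓝[s] 0) (g j))
  have hG : ∀ j < k, ∀ x ∈ Icc (0 : ℝ) 1, HasDerivWithinAt (G j) (G (j + 1) x) (Icc 0 1) x :=
    fun j hj => hasDerivWithinAt_update_Icc_of_tendsto one_pos (hg j hj.le) (hL j hj.le)
      (hL (j + 1) hj)
  have hGk : ContinuousOn (G k) (Icc 0 1) :=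
    continuousOn_update_Icc_of_tendsto (hdiff k le_rfl).continuousOn (hL k le_rfl)
  have hiter := eqOn_iteratedDerivWithin_of_hasDerivWithinAt (uniqueDiffOn_Icc one_pos) hG
  refine ⟨G 0, fun ρ hρ => update_of_ne hρ.1.ne' _ _,
    contDiffOn_of_hasDerivWithinAt_succ (uniqueDiffOn_Icc one_pos) hG hGk, ?_⟩
  intro ρ₁ h₁ ρ₂ h₂
  rw [hiter k le_rfl h₁, hiter k le_rfl h₂]
  exact abs_sub_le_mul_rpow_of_abs_deriv_le (fun x hx => hx.1) hγ0 hγ1.le hC hGk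
    (by rw [interior_Icc]; exact fun x hx => (hgk x hx).update_of_ne hx.1.ne' _)
    (by rwa [interior_Icc]) ρ₁ h₁ ρ₂ h₂
end
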